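/- arXiv:2206.04020 — 4 statements merged into one kernel-verified Lean document; each statement's English description precedes it below -/
import Mathlib

section
/- Let X ⊆ ℝⁿ be nonempty and closed and let q(x) := ½·dist²(x; X) with the Euclidean distance. Then for all x, y ∈ ℝⁿ, q(y) ≤ q(x) + d q(x)(y − x) + ½‖y − x‖², where d q(x)(w) = min { ⟨x − z, w⟩ : z ∈ proj_X(x) } is the semi-derivative of q at x. -/
/-
Every nearest point `z ∈ proj_X(x)` is a competitor for `y`, so
`dist²(y;X) ≤ ‖y − z‖² = ‖x − z‖² + 2⟨x − z, y − x⟩ + ‖y − x‖²` with `‖x − z‖ = dist(x;X)`.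
Taking the infimum over `z` gives the estimate; the infimum is over a nonempty set because
closed nonempty sets in finite dimension have nearest points.
-/

open Filter Topology Metric Set

abbrev En (n : ℕ) := EuclideanSpace ℝ (Fin n)

/-- Euclidean projection set `proj_X(x) := {z ∈ X : ‖x − z‖ = dist(x;X)}`. -/
noncomputable def projSet {V : Type*} [NormedAddCommGroup V] [NormedSpace ℝ V]
    (X : Set V) (x : V) : Set V :=
  {y ∈ X | dist x y = Metric.infDist x X}

section NearestPoints

variable {V : Type*} [NormedAddCommGroup V] [InnerProductSpace ℝ V]

theorem infDist_sq_le_of_mem {X : Set V} {z : V} (hz : z ∈ X) (x y : V) :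
    infDist y X ^ 2 ≤ ‖x - z‖ ^ 2 + 2 * inner ℝ (x - z) (y - x) + ‖y - x‖ ^ 2 :=
  calc infDist y X ^ 2 ≤ ‖y - z‖ ^ 2 := by
        gcongr
        · exact infDist_nonneg
        · simpa only [dist_eq_norm] using infDist_le_dist_of_mem hz
    _ = ‖(x - z) + (y - x)‖ ^ 2 := by rw [sub_add_sub_cancel']
    _ = ‖x - z‖ ^ 2 + 2 * inner ℝ (x - z) (y - x) + ‖y - x‖ ^ 2 := norm_add_sq_real _ _

theorem infDist_eq_norm_of_mem_projSet {X : Set V} {x z : V} (hz : z ∈ projSet X x) :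
    infDist x X = ‖x - z‖ := by
  rw [← hz.2, dist_eq_norm]

theorem projSet_nonempty [ProperSpace V] {X : Set V} (hX : IsClosed X) (hne : X.Nonempty)
    (x : V) : (projSet X x).Nonempty :=
  let ⟨z, hzX, hz⟩ := hX.exists_infDist_eq_dist hne x
  ⟨z, hzX, hz.symm⟩

theorem infDist_sq_half_le_of_mem_projSet {X : Set V} {x z : V} (hz : z ∈ projSet X x) (y : V) :
    infDist y X ^ 2 / 2 ≤ infDist x X ^ 2 / 2 + inner ℝ (x - z) (y - x) + ‖y - x‖ ^ 2 / 2 := by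
  have hsq := infDist_sq_le_of_mem hz.1 x y
  rw [infDist_eq_norm_of_mem_projSet hz]
  linarith

end NearestPoints

/-- Descent estimate for `q(x) = ½ dist²(x;X)`:
`q(y) ≤ q(x) + d q(x)(y − x) + ½‖y − x‖²`, where
`d q(x)(w) = min{⟨x − z, w⟩ : z ∈ proj_X(x)}`. -/
theorem stmt3 {n : ℕ} (X : Set (En n)) (hX : IsClosed X) (hne : X.Nonempty) (x y : En n) :
    infDist y X ^ 2 / 2 ≤ infDist x X ^ 2 / 2
      + sInf ((fun z => (inner ℝ (x - z) (y - x) : ℝ)) '' projSet X x)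
      + ‖y - x‖ ^ 2 / 2 := by
  have key : infDist y X ^ 2 / 2 - infDist x X ^ 2 / 2 - ‖y - x‖ ^ 2 / 2 ≤
      sInf ((fun z => (inner ℝ (x - z) (y - x) : ℝ)) '' projSet X x) := by
    refine le_csInf ((projSet_nonempty hX hne x).image _) ?_
    rintro _ ⟨z, hz, rfl⟩
    linarith [infDist_sq_half_le_of_mem_projSet hz y]
  linarith
end

section
/- Let ‖·‖_* be a norm on ℝⁿ that is Fréchet differentiable on ℝⁿ∖{0}, X ⊆ ℝⁿ nonempty closed, and p(x) := dist_*(x; X). Then p is semi-differentiable at every point x ∉ X; that is, for every w ∈ ℝⁿ the full limit lim_{t↓0, w'→w} (p(x+tw') − p(x))/t exists. -/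
open Filter Topology Metric Set

/-- Semi-differentiability with semi-derivative `g`. -/
def HasSemiDerivAt {V W : Type*} [NormedAddCommGroup V] [NormedSpace ℝ V]
    [NormedAddCommGroup W] [NormedSpace ℝ W] (F : V → W) (x : V) (g : V → W) : Prop :=
  ∀ w, Filter.Tendsto (fun p : ℝ × V => (p.1)⁻¹ • (F (x + p.1 • p.2) - F x))
    ((𝓝[>] (0:ℝ)) ×ˢ 𝓝 w) (𝓝 (g w))

/-- Distance to `X` in the norm `N`. -/
noncomputable def distN {V : Type*} [NormedAddCommGroup V] [NormedSpace ℝ V]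
    (N : V → ℝ) (x : V) (X : Set V) : ℝ :=
  sInf ((fun y => N (x - y)) '' X)

/-!
Writing the norm as a seminorm `ν`, the distance function `p = dist_ν(·, X)` is the infimum of the
functions `ν (· - y)`, `y ∈ X`, and its semi-derivative at `x ∉ X` is given by Danskin's formula
`w ↦ inf {Dν(x - y) w | y a nearest point to x}`.

The upper bound holds because `p ≤ ν (· - y)`, with equality at `x` when `y` is a nearest point.
For the lower bound, nearest points `yₖ` to `xₖ = x + tₖ • wₖ` cluster, by coercivity of `ν` in
finite dimension, at a nearest point `y` to `x`. Since `p x ≤ ν (x - yₖ)`, the difference quotient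
of `p` dominates a backward difference quotient of `ν` at `xₖ - yₖ` with step `tₖ`; by convexity
this quotient only decreases when the step grows to a fixed small `s`, and as `k → ∞` the
quotient with step `s` tends to one at `x - y` that is arbitrarily close to `Dν(x - y) w`.
-/

variable {E F : Type*} [NormedAddCommGroup E] [NormedSpace ℝ E]
  [NormedAddCommGroup F] [NormedSpace ℝ F]

theorem HasFDerivAt.hasSemiDerivAt {f : E → F} {f' : E →L[ℝ] F} {x : E}
    (hf : HasFDerivAt f f' x) : HasSemiDerivAt f x f' := by
  intro w
  have hfst : Tendsto (fun q : ℝ × E => q.1) (𝓝[>] 0 ×ˢ 𝓝 w) (𝓝[>] 0) := tendsto_fst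
  have hsnd : Tendsto (fun q : ℝ × E => q.2) (𝓝[>] 0 ×ˢ 𝓝 w) (𝓝 w) := tendsto_snd
  refine hf.hasFDerivWithinAt.lim (s := univ) ?_ (.of_forall fun _ => mem_univ _) ?_
  · simpa using (tendsto_nhds_of_tendsto_nhdsWithin hfst).smul hsnd
  · refine hsnd.congr' ?_
    filter_upwards [hfst.eventually self_mem_nhdsWithin] with q (hq : 0 < q.1)
    rw [inv_smul_smul₀ hq.ne']

theorem tendsto_add_smul {ι : Type*} {l : Filter ι} {t : ι → ℝ} {v : ι → E} {w : E} (x : E)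
    (ht : Tendsto t l (𝓝[>] 0)) (hv : Tendsto v l (𝓝 w)) :
    Tendsto (fun k => x + t k • v k) l (𝓝 x) := by
  simpa using tendsto_const_nhds.add ((tendsto_nhds_of_tendsto_nhdsWithin ht).smul hv)

namespace Seminorm

variable (ν : Seminorm ℝ E)

theorem continuous_of_finiteDimensional [FiniteDimensional ℝ E] : Continuous ν :=
  continuousOn_univ.1 (ν.convexOn.continuousOn isOpen_univ)

theorem exists_pos_mul_norm_le [FiniteDimensional ℝ E] (hν : ∀ z, ν z = 0 → z = 0) :
    ∃ c > 0, ∀ z, c * ‖z‖ ≤ ν z := by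
  rcases subsingleton_or_nontrivial E with _ | _
  · exact ⟨1, one_pos, fun z => by simp [Subsingleton.elim z 0]⟩
  obtain ⟨z₀, hz₀, hmin⟩ := (isCompact_sphere (0 : E) 1).exists_isMinOn
    (NormedSpace.sphere_nonempty.2 zero_le_one) ν.continuous_of_finiteDimensional.continuousOn
  have hz₀ne : z₀ ≠ 0 := ne_zero_of_mem_unit_sphere ⟨z₀, hz₀⟩
  refine ⟨ν z₀, (apply_nonneg ν z₀).lt_of_ne' (mt (hν z₀) hz₀ne), fun z => ?_⟩
  rcases eq_or_ne z 0 with rfl | hz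
  · simp
  have h := hmin (a := ‖z‖⁻¹ • z) (by simp [norm_smul, hz])
  rw [mem_ofPred_eq, map_smul_eq_mul, norm_inv, norm_norm] at h
  rwa [le_inv_mul_iff₀ (norm_pos_iff.2 hz), mul_comm] at h

theorem inv_mul_sub_le_of_le (z v : E) {t s : ℝ} (ht : 0 < t) (hts : t ≤ s) :
    t⁻¹ * (ν (z + t • v) - ν z) ≤ s⁻¹ * (ν (z + s • v) - ν z) := by
  have hconv : ConvexOn ℝ univ (fun r : ℝ => ν (z + r • v)) :=
    (ν.convexOn.translate_right z).comp_linearMap (LinearMap.toSpanSingleton ℝ E v)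
  have h := hconv.secant_mono (a := 0) (mem_univ _) (mem_univ t) (mem_univ s) ht.ne'
    (ht.trans_le hts).ne' hts
  simpa [div_eq_inv_mul] using h

theorem fderiv_apply_le {z : E} (hz : DifferentiableAt ℝ ν z) (w : E) :
    fderiv ℝ ν z w ≤ ν w := by
  have h := (hz.hasFDerivAt.hasSemiDerivAt w).comp
    ((tendsto_id (x := 𝓝[>] (0 : ℝ))).prodMk (tendsto_const_nhds (x := w)))
  refine le_of_tendsto h ?_
  filter_upwards [self_mem_nhdsWithin] with s (hs : 0 < s)
  have := map_add_le_add ν z (s • w)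
  simp only [Function.comp_apply, id, smul_eq_mul, map_smul_eq_mul,
    Real.norm_of_nonneg hs.le] at this ⊢
  rw [inv_mul_le_iff₀ hs]
  linarith

end Seminorm

section distN

variable (ν : Seminorm ℝ E) (X : Set E)

def nearestPoints (x : E) : Set E := {y ∈ X | ν (x - y) = distN ν x X}

variable {ν X}

theorem distN_le_of_mem {v y : E} (hy : y ∈ X) : distN ν v X ≤ ν (v - y) :=
  csInf_le ⟨0, forall_mem_image.2 fun _ _ => apply_nonneg _ _⟩ (mem_image_of_mem _ hy)

theorem distN_le_distN_add (hne : X.Nonempty) (a b : E) :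
    distN ν a X ≤ distN ν b X + ν (a - b) := by
  rw [← sub_le_iff_le_add]
  refine le_csInf (hne.image _) (forall_mem_image.2 fun y hy => ?_)
  have := map_add_le_add ν (a - b) (b - y)
  rw [sub_add_sub_cancel] at this
  linarith [distN_le_of_mem (ν := ν) (v := a) hy]

theorem continuous_distN [FiniteDimensional ℝ E] (hne : X.Nonempty) :
    Continuous (fun v => distN ν v X) := by
  refine continuous_iff_continuousAt.2 fun b => ?_
  have hν : Tendsto (fun a => ν (a - b)) (𝓝 b) (𝓝 0) := by
    have := (ν.continuous_of_finiteDimensional.comp (continuous_sub_right b)).tendsto b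
    simpa [Function.comp_def] using this
  refine tendsto_iff_norm_sub_tendsto_zero.2
    (squeeze_zero (fun _ => norm_nonneg _) (fun a => ?_) hν)
  rw [Real.norm_eq_abs, abs_sub_le_iff]
  have := distN_le_distN_add (ν := ν) hne b a
  rw [← map_neg_eq_map, neg_sub] at this
  exact ⟨by linarith [distN_le_distN_add (ν := ν) hne a b], by linarith⟩

theorem nearestPoints_nonempty [FiniteDimensional ℝ E] (hν : ∀ z, ν z = 0 → z = 0)
    (hX : IsClosed X) (hne : X.Nonempty) (x : E) : (nearestPoints ν X x).Nonempty := by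
  obtain ⟨c, hc, hcν⟩ := ν.exists_pos_mul_norm_le hν
  obtain ⟨y₀, hy₀⟩ := hne
  have hcoercive : Tendsto (fun y => ν (x - y)) (cocompact E) atTop := by
    refine tendsto_atTop_mono (fun y => ?_) (((tendsto_norm_cocompact_atTop (E := E)).atTop_add
      (tendsto_const_nhds (x := -‖x‖))).const_mul_atTop hc)
    have := norm_sub_norm_le y x
    rw [norm_sub_rev] at this
    nlinarith [hcν (x - y)]
  obtain ⟨y, hy, hmin⟩ := (ν.continuous_of_finiteDimensional.comp
    (continuous_const.sub continuous_id)).continuousOn.exists_isMinOn' hX hy₀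
    (mem_inf_of_left (hcoercive.eventually_ge_atTop _))
  exact ⟨y, hy, le_antisymm (le_csInf ⟨_, mem_image_of_mem _ hy₀⟩
    (forall_mem_image.2 fun z hz => hmin hz)) (distN_le_of_mem hy)⟩

theorem exists_subseq_tendsto_mem_nearestPoints [FiniteDimensional ℝ E]
    (hν : ∀ z, ν z = 0 → z = 0) (hX : IsClosed X) (hne : X.Nonempty) {x : E} {xs ys : ℕ → E}
    (hxs : Tendsto xs atTop (𝓝 x)) (hys : ∀ k, ys k ∈ nearestPoints ν X (xs k)) :
    ∃ y ∈ nearestPoints ν X x, ∃ φ : ℕ → ℕ, StrictMono φ ∧ Tendsto (ys ∘ φ) atTop (𝓝 y) := by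
  obtain ⟨c, hc, hcν⟩ := ν.exists_pos_mul_norm_le hν
  have hp := ((continuous_distN (ν := ν) hne).tendsto x).comp hxs
  have hbdd : Bornology.IsBounded (range ys) := by
    obtain ⟨R₁, hR₁⟩ := hxs.norm.bddAbove_range
    obtain ⟨R₂, hR₂⟩ := hp.bddAbove_range
    refine isBounded_iff_forall_norm_le.2 ⟨R₁ + R₂ / c, forall_mem_range.2 fun k => ?_⟩
    have h₁ : ‖ys k‖ ≤ ‖xs k‖ + ‖xs k - ys k‖ := norm_le_norm_add_norm_sub _ _
    have h₂ : c * ‖xs k - ys k‖ ≤ R₂ :=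
      (hcν _).trans ((hys k).2.trans_le (hR₂ (mem_range_self k)))
    have h₃ : ‖xs k‖ ≤ R₁ := hR₁ (mem_range_self k)
    rw [← le_div_iff₀' hc] at h₂
    linarith
  obtain ⟨y, -, φ, hφ, hy⟩ := tendsto_subseq_of_bounded hbdd fun k => mem_range_self k
  refine ⟨y, ⟨hX.mem_of_tendsto hy (.of_forall fun k => (hys _).1), ?_⟩, φ, hφ, hy⟩
  have hφ' := hφ.tendsto_atTop
  refine tendsto_nhds_unique ((ν.continuous_of_finiteDimensional.tendsto _).comp
    ((hxs.comp hφ').sub hy)) ((hp.comp hφ').congr fun k => ?_)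
  exact ((hys (φ k)).2).symm

theorem inv_mul_distN_sub_le {x y w : E} (hy : y ∈ nearestPoints ν X x) {t : ℝ} (ht : 0 ≤ t) :
    t⁻¹ * (distN ν (x + t • w) X - distN ν x X) ≤ t⁻¹ * (ν (x - y + t • w) - ν (x - y)) := by
  refine mul_le_mul_of_nonneg_left ?_ (inv_nonneg.2 ht)
  rw [hy.2, sub_add_eq_add_sub]
  linarith [distN_le_of_mem (ν := ν) (v := x + t • w) hy.1]

theorem eventually_inv_mul_distN_sub_lt {x y w : E} (hy : y ∈ nearestPoints ν X x)
    (hd : DifferentiableAt ℝ ν (x - y)) {b : ℝ} (hb : fderiv ℝ ν (x - y) w < b) :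
    ∀ᶠ q : ℝ × E in 𝓝[>] 0 ×ˢ 𝓝 w,
      q.1⁻¹ * (distN ν (x + q.1 • q.2) X - distN ν x X) < b := by
  filter_upwards [(hd.hasFDerivAt.hasSemiDerivAt w).eventually_lt_const hb,
    tendsto_fst.eventually self_mem_nhdsWithin] with q hq (hq₁ : 0 < q.1)
  exact (inv_mul_distN_sub_le hy hq₁.le).trans_lt hq

theorem eventually_lt_inv_mul_distN_sub [FiniteDimensional ℝ E] {ι : Type*} {l : Filter ι}
    {t : ι → ℝ} {v ys : ι → E} {x y w : E} (ht : Tendsto t l (𝓝[>] 0)) (hv : Tendsto v l (𝓝 w))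
    (hys : ∀ k, ys k ∈ nearestPoints ν X (x + t k • v k)) (hy : Tendsto ys l (𝓝 y))
    (hd : DifferentiableAt ℝ ν (x - y)) {a : ℝ} (ha : a < fderiv ℝ ν (x - y) w) :
    ∀ᶠ k in l, a < (t k)⁻¹ * (distN ν (x + t k • v k) X - distN ν x X) := by
  obtain ⟨s, has, hs⟩ : ∃ s, a < -(s⁻¹ * (ν (x - y + s • -w) - ν (x - y))) ∧ 0 < s := by
    have h := (hd.hasFDerivAt.hasSemiDerivAt (-w)).comp
      ((tendsto_id (x := 𝓝[>] (0 : ℝ))).prodMk (tendsto_const_nhds (x := -w)))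
    rw [map_neg] at h
    exact ((h.neg.eventually_const_lt (by simpa using ha)).and self_mem_nhdsWithin).exists
  have hz : Tendsto (fun k => x + t k • v k - ys k) l (𝓝 (x - y)) :=
    (tendsto_add_smul x ht hv).sub hy
  have hlim : Tendsto (fun k => -(s⁻¹ * (ν (x + t k • v k - ys k + s • -v k) -
      ν (x + t k • v k - ys k)))) l (𝓝 (-(s⁻¹ * (ν (x - y + s • -w) - ν (x - y))))) := by
    have hc := ν.continuous_of_finiteDimensional
    exact ((((hc.tendsto _).comp (hz.add (hv.neg.const_smul s))).sub
      ((hc.tendsto _).comp hz)).const_mul _).neg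
  filter_upwards [hlim.eventually_const_lt has, ht.eventually self_mem_nhdsWithin,
    (tendsto_nhds_of_tendsto_nhdsWithin ht).eventually (gt_mem_nhds hs)]
    with k hk (htk : 0 < t k) hts
  calc a < _ := hk
    _ ≤ -((t k)⁻¹ * (ν (x + t k • v k - ys k + t k • -v k) - ν (x + t k • v k - ys k))) :=
        neg_le_neg (ν.inv_mul_sub_le_of_le _ _ htk hts.le)
    _ ≤ _ := by
        rw [← mul_neg, neg_sub]
        refine mul_le_mul_of_nonneg_left ?_ (inv_nonneg.2 htk.le)
        rw [(hys k).2, show x + t k • v k - ys k + t k • -v k = x - ys k by rw [smul_neg]; abel]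
        linarith [distN_le_of_mem (ν := ν) (v := x) (hys k).1]

end distN

theorem hasSemiDerivAt_distN [FiniteDimensional ℝ E] {ν : Seminorm ℝ E} {X : Set E}
    (hν : ∀ z, ν z = 0 → z = 0) (hdiff : ∀ z, z ≠ 0 → DifferentiableAt ℝ ν z)
    (hX : IsClosed X) (hne : X.Nonempty) {x : E} (hx : x ∉ X) :
    HasSemiDerivAt (fun v => distN ν v X) x
      (fun w => sInf ((fun y => fderiv ℝ ν (x - y) w) '' nearestPoints ν X x)) := by
  intro w
  have hd : ∀ y ∈ nearestPoints ν X x, DifferentiableAt ℝ ν (x - y) := fun y hy =>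
    hdiff _ (sub_ne_zero.2 (ne_of_mem_of_not_mem hy.1 hx).symm)
  have hbdd : BddBelow ((fun y => fderiv ℝ ν (x - y) w) '' nearestPoints ν X x) := by
    refine ⟨-ν w, forall_mem_image.2 fun y hy => ?_⟩
    have := ν.fderiv_apply_le (hd y hy) (-w)
    rw [map_neg, map_neg_eq_map] at this
    linarith
  refine tendsto_of_subseq_tendsto fun u hu => ?_
  have ht : Tendsto (fun k => (u k).1) atTop (𝓝[>] 0) := tendsto_fst.comp hu
  have hv : Tendsto (fun k => (u k).2) atTop (𝓝 w) := tendsto_snd.comp hu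
  choose ys hys using fun k => nearestPoints_nonempty hν hX hne (x + (u k).1 • (u k).2)
  obtain ⟨y, hy, φ, hφ, hyφ⟩ :=
    exists_subseq_tendsto_mem_nearestPoints hν hX hne (tendsto_add_smul x ht hv) hys
  have hφ := hφ.tendsto_atTop
  refine ⟨φ, tendsto_order.2 ⟨fun a ha => ?_, fun b hb => ?_⟩⟩
  · exact eventually_lt_inv_mul_distN_sub (ht.comp hφ) (hv.comp hφ) (fun k => hys (φ k)) hyφ
      (hd y hy) (ha.trans_le (csInf_le hbdd (mem_image_of_mem _ hy)))
  · obtain ⟨_, ⟨y', hy', rfl⟩, hlt⟩ :=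
      exists_lt_of_csInf_lt ((nearestPoints_nonempty hν hX hne x).image _) hb
    exact (hu.comp hφ).eventually (eventually_inv_mul_distN_sub_lt hy' (hd y' hy') hlt)

/-- For a norm `N = ‖·‖_*` on `ℝⁿ` that is Fréchet differentiable away from `0` and a nonempty
closed set `X`, the distance function `p = dist_*(·;X)` is semi-differentiable at every
`x ∉ X`. -/
theorem stmt7 {n : ℕ} (N : En n → ℝ)
    (hN0 : ∀ z, N z = 0 ↔ z = 0)
    (hNsmul : ∀ (a : ℝ) z, N (a • z) = |a| * N z)
    (hNadd : ∀ z₁ z₂, N (z₁ + z₂) ≤ N z₁ + N z₂)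
    (hNdiff : ∀ z, z ≠ 0 → DifferentiableAt ℝ N z)
    (X : Set (En n)) (hX : IsClosed X) (hne : X.Nonempty)
    (x : En n) (hx : x ∉ X) :
    ∃ g : En n → ℝ, HasSemiDerivAt (fun z => distN N z X) x g := by
  let ν : Seminorm ℝ (En n) := .of N hNadd fun a z => by rw [hNsmul, Real.norm_eq_abs]
  exact ⟨_, hasSemiDerivAt_distN (ν := ν) (fun z => (hN0 z).1) hNdiff hX hne hx⟩
end

section
/- Let ‖·‖_* be a norm on ℝⁿ that is Fréchet differentiable on ℝⁿ∖{0}, X ⊆ ℝⁿ nonempty closed, and p(x) := dist_*(x; X). Then for every x ∈ X and every w ∈ ℝⁿ, the subderivative of p satisfies d p(x)(w) = dist_*(w; T_X(x)), the ‖·‖_*-distance from w to the tangent cone of X at x. -/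
open Filter Topology Metric Set

/-- Subderivative `d f(x)(w) := liminf_{t↓0, w'→w} (f(x+tw') − f(x))/t`. -/
noncomputable def subderiv {V : Type*} [NormedAddCommGroup V] [NormedSpace ℝ V]
    (f : V → ℝ) (x w : V) : EReal :=
  Filter.liminf (fun p : ℝ × V => (((f (x + p.1 • p.2) - f x) / p.1 : ℝ) : EReal))
    ((𝓝[>] (0:ℝ)) ×ˢ 𝓝 w)

/-- Bouligand tangent cone. -/
def tanCone {V : Type*} [NormedAddCommGroup V] [NormedSpace ℝ V] (X : Set V) (x : V) : Set V :=
  {w | ∃ t : ℕ → ℝ, ∃ v : ℕ → V, (∀ k, 0 < t k) ∧ Filter.Tendsto t Filter.atTop (𝓝 0) ∧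
    Filter.Tendsto v Filter.atTop (𝓝 w) ∧ ∀ k, x + t k • v k ∈ X}

/-!
For `p = dist_*(·; X)`: if `x + t_k v_k ∈ X` with `t_k ↓ 0`, `v_k → v`, then
`p (x + t_k w) ≤ t_k ‖w - v_k‖_*`, which bounds `d p(x)(w)` by `‖w - v‖_*` for every
`v ∈ T_X(x)`. Conversely, if the difference quotients along `t_k ↓ 0`, `u_k → w` stay below `c`,
near-minimisers `y_k ∈ X` give `v_k = (y_k - x) / t_k` with `‖u_k - v_k‖_* < c`. In finite
dimensions `‖·‖_*` dominates a multiple of the ambient norm, so `(v_k)` is bounded, and any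
cluster point lies in `T_X(x)` at `‖·‖_*`-distance at most `c` from `w`.
-/

section Seminorm

variable {V : Type*} [NormedAddCommGroup V] [NormedSpace ℝ V] [FiniteDimensional ℝ V]

theorem Seminorm.continuous_of_finiteDimensional_s9 (p : Seminorm ℝ V) : Continuous p :=
  p.convexOn.locallyLipschitz.continuous

theorem Seminorm.exists_pos_mul_norm_le_s9 (p : Seminorm ℝ V) (hp : ∀ z, p z = 0 → z = 0) :
    ∃ c > 0, ∀ z, c * ‖z‖ ≤ p z := by
  rcases subsingleton_or_nontrivial V with hV | hV
  · exact ⟨1, one_pos, fun z => by simp [Subsingleton.elim z 0]⟩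
  obtain ⟨z₀, hz₀, hmin⟩ := (isCompact_sphere (0 : V) 1).exists_isMinOn
    (NormedSpace.sphere_nonempty.2 zero_le_one) p.continuous_of_finiteDimensional_s9.continuousOn
  have hz₀0 : z₀ ≠ 0 := ne_zero_of_mem_unit_sphere ⟨z₀, hz₀⟩
  refine ⟨p z₀, (apply_nonneg p z₀).lt_of_ne' (mt (hp z₀) hz₀0), fun z => ?_⟩
  rcases eq_or_ne z 0 with rfl | hz
  · simp
  have hz' : 0 < ‖z‖ := norm_pos_iff.2 hz
  have h : p z₀ ≤ p (‖z‖⁻¹ • z) := hmin (by simp [norm_smul, hz'.ne'])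
  rw [map_smul_eq_mul, norm_inv, norm_norm] at h
  rwa [le_inv_mul_iff₀ hz', mul_comm] at h

end Seminorm

section distN

variable {V : Type*} [NormedAddCommGroup V] [NormedSpace ℝ V] (p : Seminorm ℝ V) {X : Set V}

theorem distN_nonneg (z : V) : 0 ≤ distN p z X :=
  Real.sInf_nonneg (by rintro _ ⟨y, -, rfl⟩; exact apply_nonneg p _)

theorem distN_le {z y : V} (hy : y ∈ X) : distN p z X ≤ p (z - y) :=
  csInf_le ⟨0, by rintro _ ⟨y, -, rfl⟩; exact apply_nonneg p _⟩ ⟨y, hy, rfl⟩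

theorem distN_of_mem {z : V} (hz : z ∈ X) : distN p z X = 0 :=
  le_antisymm (by simpa using distN_le p (z := z) hz) (distN_nonneg p z)

theorem distN_add_smul_le {x u v : V} {t : ℝ} (ht : 0 ≤ t) (hv : x + t • v ∈ X) :
    distN p (x + t • u) X ≤ t * p (u - v) :=
  calc distN p (x + t • u) X ≤ p (x + t • u - (x + t • v)) := distN_le p hv
    _ = t * p (u - v) := by
      rw [add_sub_add_left_eq_sub, ← smul_sub, map_smul_eq_mul, Real.norm_of_nonneg ht]

theorem exists_add_smul_mem_of_distN_lt (hX : X.Nonempty) {x u : V} {t c : ℝ} (ht : 0 < t)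
    (h : distN p (x + t • u) X < t * c) : ∃ v, x + t • v ∈ X ∧ p (u - v) < c := by
  obtain ⟨_, ⟨y, hy, rfl⟩, hlt⟩ := exists_lt_of_csInf_lt (hX.image _) h
  refine ⟨t⁻¹ • (y - x), by rwa [smul_inv_smul₀ ht.ne', add_sub_cancel], ?_⟩
  have : x + t • u - y = t • (u - t⁻¹ • (y - x)) := by
    rw [smul_sub, smul_inv_smul₀ ht.ne']; abel
  dsimp only at hlt
  rw [this, map_smul_eq_mul, Real.norm_of_nonneg ht.le] at hlt
  exact lt_of_mul_lt_mul_left hlt ht.le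

end distN

section tanCone

variable {V : Type*} [NormedAddCommGroup V] [NormedSpace ℝ V] {X : Set V} {x : V}

theorem zero_mem_tanCone (hx : x ∈ X) : (0 : V) ∈ tanCone X x :=
  ⟨fun k => 1 / (k + 1), fun _ => 0, fun k => by positivity,
    tendsto_one_div_add_atTop_nhds_zero_nat, tendsto_const_nhds, fun k => by simpa using hx⟩

theorem exists_mem_tanCone_le_of_tendsto [FiniteDimensional ℝ V] (p : Seminorm ℝ V)
    (hp : ∀ z, p z = 0 → z = 0) {w : V} {c : ℝ} {t : ℕ → ℝ} {u v : ℕ → V}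
    (ht : ∀ k, 0 < t k) (ht0 : Tendsto t atTop (𝓝 0)) (hu : Tendsto u atTop (𝓝 w))
    (hv : ∀ k, x + t k • v k ∈ X) (hpc : ∀ k, p (u k - v k) ≤ c) :
    ∃ v' ∈ tanCone X x, p (w - v') ≤ c := by
  obtain ⟨c₀, hc₀, hpc₀⟩ := p.exists_pos_mul_norm_le_s9 hp
  obtain ⟨R, hR⟩ := isBounded_iff_forall_norm_le.1 (isBounded_range_of_tendsto u hu)
  have hv_bdd : ∀ k, v k ∈ closedBall (0 : V) (R + c / c₀) := by
    intro k
    have huv : ‖u k - v k‖ ≤ c / c₀ := by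
      rw [le_div_iff₀ hc₀, mul_comm]; exact (hpc₀ _).trans (hpc k)
    rw [mem_closedBall_zero_iff]
    calc ‖v k‖ ≤ ‖u k‖ + ‖u k - v k‖ := norm_le_norm_add_norm_sub (u k) (v k)
      _ ≤ R + c / c₀ := add_le_add (hR _ ⟨k, rfl⟩) huv
  obtain ⟨v', -, φ, hφ, hvφ⟩ := tendsto_subseq_of_bounded isBounded_closedBall hv_bdd
  refine ⟨v', ⟨t ∘ φ, v ∘ φ, fun k => ht _, ht0.comp hφ.tendsto_atTop, hvφ, fun k => hv _⟩, ?_⟩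
  have hlim : Tendsto (fun k => p (u (φ k) - v (φ k))) atTop (𝓝 (p (w - v'))) :=
    (p.continuous_of_finiteDimensional_s9.tendsto _).comp ((hu.comp hφ.tendsto_atTop).sub hvφ)
  exact le_of_tendsto' hlim fun k => hpc _

end tanCone

section subderiv

variable {V : Type*} [NormedAddCommGroup V] [NormedSpace ℝ V] (p : Seminorm ℝ V)
  {X : Set V} {x : V}

theorem subderiv_distN_le_of_mem_tanCone (hp : Continuous p) (hx : x ∈ X) {v : V}
    (hv : v ∈ tanCone X x) (w : V) :
    subderiv (fun z => distN p z X) x w ≤ p (w - v) := by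
  obtain ⟨t, vs, ht, ht0, hvs, hmem⟩ := hv
  refine EReal.le_of_forall_lt_iff_le.1 fun r hr => ?_
  have hseq : Tendsto (fun k => (t k, w)) atTop ((𝓝[>] (0 : ℝ)) ×ˢ 𝓝 w) :=
    (tendsto_nhdsWithin_iff.2 ⟨ht0, Eventually.of_forall ht⟩).prodMk tendsto_const_nhds
  have hlt : ∀ᶠ k in atTop, p (w - vs k) < r :=
    ((hp.tendsto _).comp (tendsto_const_nhds.sub hvs)).eventually_lt_const
      (EReal.coe_lt_coe_iff.1 hr)
  refine liminf_le_of_frequently_le' (hseq.frequently (hlt.mono fun k hk => ?_).frequently)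
  dsimp only
  rw [distN_of_mem p hx, sub_zero, EReal.coe_le_coe_iff, div_le_iff₀ (ht k)]
  calc distN p (x + t k • w) X ≤ t k * p (w - vs k) := distN_add_smul_le p (ht k).le (hmem k)
    _ ≤ r * t k := by rw [mul_comm]; exact mul_le_mul_of_nonneg_right hk.le (ht k).le

theorem subderiv_distN_le (hp : Continuous p) (hx : x ∈ X) (w : V) :
    subderiv (fun z => distN p z X) x w ≤ distN p w (tanCone X x) := by
  refine EReal.le_of_forall_lt_iff_le.1 fun r hr => ?_
  obtain ⟨_, ⟨v, hv, rfl⟩, hvr⟩ := exists_lt_of_csInf_lt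
    (Set.Nonempty.image _ ⟨0, zero_mem_tanCone hx⟩) (EReal.coe_lt_coe_iff.1 hr)
  exact (subderiv_distN_le_of_mem_tanCone p hp hx hv w).trans (EReal.coe_le_coe_iff.2 hvr.le)

theorem le_subderiv_distN [FiniteDimensional ℝ V] (hp : ∀ z, p z = 0 → z = 0) (hx : x ∈ X)
    (w : V) : (distN p w (tanCone X x) : EReal) ≤ subderiv (fun z => distN p z X) x w := by
  refine (le_liminf_iff).2 fun b hb => ?_
  obtain ⟨c, hbc, hcd⟩ := EReal.exists_between_coe_real hb
  rw [EReal.coe_lt_coe_iff] at hcd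
  by_contra hfreq
  rw [not_eventually] at hfreq
  obtain ⟨q, hq, hqc⟩ := exists_seq_forall_of_frequently
    (hfreq.and_eventually (eventually_mem_nhdsWithin.prod_inl _))
  have hquot : ∀ k, distN p (x + (q k).1 • (q k).2) X < (q k).1 * c := fun k => by
    obtain ⟨hle, hpos⟩ := hqc k
    have := (not_lt.1 hle).trans_lt hbc
    dsimp only at this
    rw [distN_of_mem p hx, sub_zero, EReal.coe_lt_coe_iff, div_lt_iff₀ hpos] at this
    linarith
  choose v hvX hvc using fun k => exists_add_smul_mem_of_distN_lt p ⟨x, hx⟩ (hqc k).2 (hquot k)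
  rw [tendsto_prod_iff'] at hq
  obtain ⟨v', hv', hv'c⟩ := exists_mem_tanCone_le_of_tendsto p hp (fun k => (hqc k).2)
    (hq.1.mono_right nhdsWithin_le_nhds) hq.2 hvX fun k => (hvc k).le
  exact ((distN_le p hv').trans hv'c).not_gt hcd

theorem subderiv_distN_eq [FiniteDimensional ℝ V] (hp : ∀ z, p z = 0 → z = 0) (hx : x ∈ X)
    (w : V) : subderiv (fun z => distN p z X) x w = distN p w (tanCone X x) :=
  le_antisymm (subderiv_distN_le p p.continuous_of_finiteDimensional_s9 hx w)
    (le_subderiv_distN p hp hx w)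

end subderiv

theorem stmt9_general {n : ℕ} (N : En n → ℝ)
    (hN0 : ∀ z, N z = 0 ↔ z = 0)
    (hNsmul : ∀ (a : ℝ) z, N (a • z) = |a| * N z)
    (hNadd : ∀ z₁ z₂, N (z₁ + z₂) ≤ N z₁ + N z₂)
    (X : Set (En n))
    (x : En n) (hx : x ∈ X) :
    ∀ w, subderiv (fun z => distN N z X) x w = ((distN N w (tanCone X x) : ℝ) : EReal) :=
  subderiv_distN_eq (Seminorm.of N hNadd fun a z => by rw [Real.norm_eq_abs, hNsmul])
    (fun z => (hN0 z).1) hx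

/-- For a Fréchet smooth norm `N = ‖·‖_*`, a nonempty closed set `X` and `x ∈ X`, the
subderivative of `p = dist_*(·;X)` at `x` is `d p(x)(w) = dist_*(w; T_X(x))`. -/
theorem stmt9 {n : ℕ} (N : En n → ℝ)
    (hN0 : ∀ z, N z = 0 ↔ z = 0)
    (hNsmul : ∀ (a : ℝ) z, N (a • z) = |a| * N z)
    (hNadd : ∀ z₁ z₂, N (z₁ + z₂) ≤ N z₁ + N z₂)
    (hNdiff : ∀ z, z ≠ 0 → DifferentiableAt ℝ N z)
    (X : Set (En n)) (hX : IsClosed X) (hne : X.Nonempty)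
    (x : En n) (hx : x ∈ X) :
    ∀ w, subderiv (fun z => distN N z X) x w = ((distN N w (tanCone X x) : ℝ) : EReal) :=
  stmt9_general N hN0 hNsmul hNadd X x hx
end

section
/- Consider the problem: minimize φ(x) subject to F(x) ∈ X, with feasible set Ω := {x : F(x) ∈ X}, where X ⊆ ℝᵐ is closed, F : ℝⁿ → ℝᵐ is semi-differentiable at x̄ ∈ Ω, φ is Lipschitz continuous around x̄ with constant ℓ ≥ 0, and the metric subregularity constraint qualification dist(x; Ω) ≤ κ·dist(F(x); X) holds for all x near x̄ with constant κ > 0. If x̄ is a d-stationary point of the constrained problem (F(x̄) ∈ X and d φ(x̄)(w) ≥ 0 for all w with dF(x̄)(w) ∈ T_X(F(x̄))), then for every ρ ≥ κℓ, x̄ is a d-stationary point of the penalized function f_ρ(x) := φ(x) + ρ·dist(F(x); X), i.e. d f_ρ(x̄)(w) ≥ 0 for all w ∈ ℝⁿ. -/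
open Filter Topology Metric Set

/-!
Suppose the subderivative of `f_ρ` in some direction is below `c < 0`, realized along
`t_k ↓ 0`, `w_k → w`, and move `x_k = x̄ + t_k w_k` to an almost nearest point `z_k ∈ Ω`.
Metric subregularity makes `dist(x_k, z_k) ≲ κ·dist(F x_k; X)`, so by the Lipschitz property
`φ` grows by at most `κℓ·dist(F x_k; X) ≤ ρ·dist(F x_k; X)` from `x_k` to `z_k`: the
difference quotients of `φ` along `z_k` stay below `c + o(1)`. As `x̄ ∈ Ω`, the directions
`(z_k - x̄)/t_k` are bounded; a limit `a` of a subsequence has `dF a ∈ T_X(F x̄)` because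
`F z_k ∈ X`, and `dφ(x̄)(a) ≤ c < 0`, contradicting d-stationarity.
-/

section Sequences

variable {V W : Type*} [NormedAddCommGroup V] [NormedSpace ℝ V]
  [NormedAddCommGroup W] [NormedSpace ℝ W]

lemma exists_seq_of_subderiv_lt {f : V → ℝ} {x w : V} {c : ℝ} (h : subderiv f x w < c) :
    ∃ t : ℕ → ℝ, ∃ v : ℕ → V, (∀ k, 0 < t k) ∧ Tendsto t atTop (𝓝 0) ∧
      Tendsto v atTop (𝓝 w) ∧ ∀ k, (f (x + t k • v k) - f x) / t k < c := by
  have hpos : ∀ᶠ p : ℝ × V in (𝓝[>] (0:ℝ)) ×ˢ 𝓝 w, 0 < p.1 :=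
    tendsto_fst.eventually self_mem_nhdsWithin
  have hlt : ∃ᶠ p : ℝ × V in (𝓝[>] (0:ℝ)) ×ˢ 𝓝 w, (f (x + p.1 • p.2) - f x) / p.1 < c :=
    (frequently_lt_of_liminf_lt (h := h)).mono fun _ hp =>
      EReal.coe_lt_coe_iff.1 hp
  obtain ⟨p, hp, hpc⟩ := exists_seq_forall_of_frequently (hlt.and_eventually hpos)
  exact ⟨fun k => (p k).1, fun k => (p k).2, fun k => (hpc k).2,
    (tendsto_fst.comp hp).mono_right nhdsWithin_le_nhds, tendsto_snd.comp hp,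
    fun k => (hpc k).1⟩

lemma subderiv_le_of_tendsto {f : V → ℝ} {x w : V} {c : ℝ} {t g : ℕ → ℝ} {v : ℕ → V}
    (ht : Tendsto t atTop (𝓝[>] 0)) (hv : Tendsto v atTop (𝓝 w))
    (hg : Tendsto g atTop (𝓝 c))
    (hle : ∀ᶠ k in atTop, (f (x + t k • v k) - f x) / t k ≤ g k) :
    subderiv f x w ≤ c :=
  calc subderiv f x w
      ≤ liminf (fun k => (((f (x + t k • v k) - f x) / t k : ℝ) : EReal)) atTop :=
        (ht.prodMk hv).liminf_le_liminf_comp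
    _ ≤ liminf (fun k => (g k : EReal)) atTop :=
        liminf_le_liminf (hle.mono fun _ hk => EReal.coe_le_coe_iff.2 hk)
    _ = c := (EReal.tendsto_coe.2 hg).liminf_eq

lemma HasSemiDerivAt.mem_tanCone {F : V → W} {x a : V} {dF : V → W} {X : Set W}
    (hF : HasSemiDerivAt F x dF) {t : ℕ → ℝ} {v : ℕ → V} (htpos : ∀ k, 0 < t k)
    (ht : Tendsto t atTop (𝓝 0)) (hv : Tendsto v atTop (𝓝 a))
    (hX : ∀ k, F (x + t k • v k) ∈ X) : dF a ∈ tanCone X (F x) := by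
  have ht' : Tendsto t atTop (𝓝[>] 0) := tendsto_nhdsWithin_iff.2 ⟨ht, .of_forall htpos⟩
  refine ⟨t, fun k => (t k)⁻¹ • (F (x + t k • v k) - F x), htpos, ht,
    (hF a).comp (ht'.prodMk hv), fun k => ?_⟩
  rw [smul_inv_smul₀ (htpos k).ne', add_sub_cancel]
  exact hX k

lemma HasSemiDerivAt.exists_tanCone_subderiv_le [ProperSpace V] {F : V → W} {x : V}
    {dF : V → W} {X : Set W} (hF : HasSemiDerivAt F x dF) {f : V → ℝ} {t g : ℕ → ℝ}
    {z : ℕ → V} {C c : ℝ} (htpos : ∀ k, 0 < t k) (ht : Tendsto t atTop (𝓝 0))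
    (hX : ∀ k, F (z k) ∈ X) (hz : ∀ᶠ k in atTop, dist (z k) x ≤ C * t k)
    (hg : Tendsto g atTop (𝓝 c)) (hle : ∀ᶠ k in atTop, (f (z k) - f x) / t k ≤ g k) :
    ∃ a, dF a ∈ tanCone X (F x) ∧ subderiv f x a ≤ c := by
  set v : ℕ → V := fun k => (t k)⁻¹ • (z k - x)
  have hzv : ∀ k, x + t k • v k = z k := fun k => by
    simp only [v, smul_inv_smul₀ (htpos k).ne', add_sub_cancel]
  have hv : ∀ᶠ k in atTop, v k ∈ closedBall 0 C := hz.mono fun k hk => by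
    rwa [mem_closedBall_zero_iff, norm_smul, norm_inv, Real.norm_of_nonneg (htpos k).le,
      ← dist_eq_norm, inv_mul_le_iff₀ (htpos k), mul_comm]
  obtain ⟨a, -, σ, hσ, hva⟩ := tendsto_subseq_of_frequently_bounded isBounded_closedBall
    hv.frequently
  have htσ : Tendsto (t ∘ σ) atTop (𝓝 0) := ht.comp hσ.tendsto_atTop
  refine ⟨a, hF.mem_tanCone (fun k => htpos (σ k)) htσ hva fun k => ?_,
    subderiv_le_of_tendsto (tendsto_nhdsWithin_iff.2 ⟨htσ, .of_forall fun k => htpos (σ k)⟩)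
      hva (hg.comp hσ.tendsto_atTop) ?_⟩
  · simpa only [Function.comp, hzv] using hX (σ k)
  · filter_upwards [hσ.tendsto_atTop.eventually hle] with k hk
    simpa only [Function.comp, hzv] using hk

end Sequences

lemma dist_le_two_mul_dist_add_of_dist_lt_infDist_add {α : Type*} [PseudoMetricSpace α]
    {s : Set α} {x y z : α} {ε : ℝ} (hy : y ∈ s) (hz : dist x z < infDist x s + ε) :
    dist z y ≤ 2 * dist x y + ε := by
  have hs : infDist x s ≤ dist x y := infDist_le_dist_of_mem hy
  linarith [dist_triangle_left z y x]

theorem exists_tanCone_subderiv_le_of_penalty_lt {V W : Type*} [NormedAddCommGroup V]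
    [NormedSpace ℝ V] [ProperSpace V] [NormedAddCommGroup W] [NormedSpace ℝ W]
    {φ : V → ℝ} {F : V → W} {X : Set W} {xb : V} {dF : V → W} {ℓ κ ρ c : ℝ}
    (hxb : F xb ∈ X) (hF : HasSemiDerivAt F xb dF) (hℓ : 0 ≤ ℓ)
    (hLip : ∀ᶠ p in 𝓝 (xb, xb), |φ p.1 - φ p.2| ≤ ℓ * dist p.1 p.2)
    (hMS : ∀ᶠ x in 𝓝 xb, infDist x {z | F z ∈ X} ≤ κ * infDist (F x) X) (hρ : κ * ℓ ≤ ρ)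
    {t : ℕ → ℝ} {w : ℕ → V} {w₀ : V} (htpos : ∀ k, 0 < t k) (ht : Tendsto t atTop (𝓝 0))
    (hw : Tendsto w atTop (𝓝 w₀))
    (hq : ∀ k, φ (xb + t k • w k) + ρ * infDist (F (xb + t k • w k)) X - φ xb < c * t k) :
    ∃ a, dF a ∈ tanCone X (F xb) ∧ subderiv φ xb a ≤ c := by
  set Ω : Set V := {z | F z ∈ X}
  set x : ℕ → V := fun k => xb + t k • w k with hx_def
  have hx : Tendsto x atTop (𝓝 xb) := by simpa using tendsto_const_nhds.add (ht.smul hw)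
  have hnear : ∀ k, ∃ z ∈ Ω, dist (x k) z < infDist (x k) Ω + t k ^ 2 := fun k =>
    (infDist_lt_iff ⟨xb, hxb⟩).1 (lt_add_of_pos_right _ (pow_pos (htpos k) 2))
  choose z hzΩ hz using hnear
  have hz_xb : ∀ k, dist (z k) xb ≤ t k * (2 * ‖w k‖ + t k) := fun k => by
    have hxk : dist (x k) xb = t k * ‖w k‖ := by
      simp [hx_def, dist_eq_norm, norm_smul, abs_of_pos (htpos k)]
    have hΩ : xb ∈ Ω := hxb
    linarith [dist_le_two_mul_dist_add_of_dist_lt_infDist_add hΩ (hz k)]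
  have hbound : Tendsto (fun k => 2 * ‖w k‖ + t k) atTop (𝓝 (2 * ‖w₀‖)) := by
    simpa using (hw.norm.const_mul 2).add ht
  have hz_lim : Tendsto z atTop (𝓝 xb) :=
    tendsto_iff_dist_tendsto_zero.2
      (squeeze_zero (fun _ => dist_nonneg) hz_xb (by simpa using ht.mul hbound))
  have hz_le : ∀ᶠ k in atTop, dist (z k) xb ≤ (2 * ‖w₀‖ + 1) * t k :=
    (hbound.eventually_le_const (lt_add_one _)).mono fun k hk =>
      (hz_xb k).trans (by nlinarith [htpos k])
  have hquot : ∀ᶠ k in atTop, (φ (z k) - φ xb) / t k ≤ c + ℓ * t k := by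
    filter_upwards [(hx.prodMk_nhds hz_lim).eventually hLip, hx.eventually hMS]
      with k hL hM
    rw [div_le_iff₀ (htpos k)]
    have hd : 0 ≤ infDist (F (x k)) X := infDist_nonneg
    have hdist : ℓ * dist (x k) (z k) ≤ ℓ * (κ * infDist (F (x k)) X + t k ^ 2) :=
      mul_le_mul_of_nonneg_left (by linarith [hz k]) hℓ
    have hpay : κ * ℓ * infDist (F (x k)) X ≤ ρ * infDist (F (x k)) X :=
      mul_le_mul_of_nonneg_right hρ hd
    linarith [(abs_le.1 hL).1, hq k]
  exact hF.exists_tanCone_subderiv_le htpos ht hzΩ hz_le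
    (by simpa using (ht.const_mul ℓ).const_add c) hquot

theorem stmt14_general {n m : ℕ} (φ : En n → ℝ) (F : En n → En m) (X : Set (En m))
    (xb : En n) (hxb : F xb ∈ X) (dF : En n → En m) (hF : HasSemiDerivAt F xb dF)
    (ℓ : ℝ) (hℓ : 0 ≤ ℓ)
    (hLip : ∃ δ > (0:ℝ), ∀ x ∈ ball xb δ, ∀ y ∈ ball xb δ, |φ x - φ y| ≤ ℓ * dist x y)
    (κ : ℝ)
    (hMS : ∀ᶠ x in 𝓝 xb, infDist x {z | F z ∈ X} ≤ κ * infDist (F x) X)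
    (hstat : ∀ w, dF w ∈ tanCone X (F xb) → (0 : EReal) ≤ subderiv φ xb w) :
    ∀ ρ : ℝ, κ * ℓ ≤ ρ →
      ∀ w, (0 : EReal) ≤ subderiv (fun x => φ x + ρ * infDist (F x) X) xb w := by
  obtain ⟨δ, hδ, hL⟩ := hLip
  have hLip_nhds : ∀ᶠ p in 𝓝 (xb, xb), |φ p.1 - φ p.2| ≤ ℓ * dist p.1 p.2 :=
    mem_of_superset (prod_mem_nhds (ball_mem_nhds xb hδ) (ball_mem_nhds xb hδ))
      fun p hp => hL _ hp.1 _ hp.2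
  intro ρ hρ w
  by_contra! hneg
  obtain ⟨c, hc, hc0⟩ := EReal.exists_between_coe_real hneg
  obtain ⟨t, v, htpos, ht, hv, hq⟩ := exists_seq_of_subderiv_lt hc
  have hq' : ∀ k,
      φ (xb + t k • v k) + ρ * infDist (F (xb + t k • v k)) X - φ xb < c * t k := fun k => by
    simpa [infDist_zero_of_mem hxb, div_lt_iff₀ (htpos k)] using hq k
  obtain ⟨a, ha, hac⟩ :=
    exists_tanCone_subderiv_le_of_penalty_lt hxb hF hℓ hLip_nhds hMS hρ htpos ht hv hq'
  exact ((hstat a ha).trans hac).not_gt (mod_cast hc0)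

/-- A feasible d-stationary point of the constrained problem is a d-stationary point of the
exact penalty `f_ρ = φ + ρ·dist(F(·);X)` for every `ρ ≥ κℓ`, under the metric subregularity
constraint qualification with constant `κ`. -/
theorem stmt14 {n m : ℕ} (φ : En n → ℝ) (F : En n → En m) (X : Set (En m)) (hX : IsClosed X)
    (xb : En n) (hxb : F xb ∈ X) (dF : En n → En m) (hF : HasSemiDerivAt F xb dF)
    (ℓ : ℝ) (hℓ : 0 ≤ ℓ)
    (hLip : ∃ δ > (0:ℝ), ∀ x ∈ ball xb δ, ∀ y ∈ ball xb δ, |φ x - φ y| ≤ ℓ * dist x y)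
    (κ : ℝ) (hκ : 0 < κ)
    (hMS : ∀ᶠ x in 𝓝 xb, infDist x {z | F z ∈ X} ≤ κ * infDist (F x) X)
    (hstat : ∀ w, dF w ∈ tanCone X (F xb) → (0 : EReal) ≤ subderiv φ xb w) :
    ∀ ρ : ℝ, κ * ℓ ≤ ρ →
      ∀ w, (0 : EReal) ≤ subderiv (fun x => φ x + ρ * infDist (F x) X) xb w :=
  stmt14_general φ F X xb hxb dF hF ℓ hℓ hLip κ hMS hstat
end
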